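/- Let J be a stable, regular J-class of a semigroup S, and let N be a normal subgroup of a maximal subgroup (group H-class) contained in J. Then the relation ν_N = {(sxt, syt) ∈ J × J : x, y ∈ N, s, t ∈ S¹} is contained in Green's H relation and is an equivalence relation on J. -/

import Mathlib

namespace SG

variable {S : Type*} [Semigroup S]

/-- An ideal of a semigroup: a nonempty subset closed under left and right
multiplication by arbitrary elements. -/
def IsIdeal (I : Set S) : Prop :=
  I.Nonempty ∧ ∀ x ∈ I, ∀ a : S, a * x ∈ I ∧ x * a ∈ I

/-- The minimal ideal: an ideal contained in every ideal. -/
def IsMinIdeal (M : Set S) : Prop :=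
  IsIdeal M ∧ ∀ I : Set S, IsIdeal I → M ⊆ I

/-- Every element of the set is regular. -/
def RegularSet (M : Set S) : Prop := ∀ m ∈ M, ∃ y : S, m * y * m = m

/-- `f` is a retraction of the ideal `I` onto the minimal ideal `M`:
a homomorphism `I → M` fixing `M` pointwise. -/
def IsRetraction (I M : Set S) (f : S → S) : Prop :=
  (∀ x ∈ I, f x ∈ M) ∧ (∀ x ∈ I, ∀ y ∈ I, f (x * y) = f x * f y) ∧ ∀ x ∈ M, f x = x

/-- Green's R relation (via S¹ = `WithOne S`). -/
def GreenR (a b : S) : Prop :=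
  (∃ u : WithOne S, (a : WithOne S) * u = (b : WithOne S)) ∧
    ∃ v : WithOne S, (b : WithOne S) * v = (a : WithOne S)

/-- Green's L relation. -/
def GreenL (a b : S) : Prop :=
  (∃ u : WithOne S, u * (a : WithOne S) = (b : WithOne S)) ∧
    ∃ v : WithOne S, v * (b : WithOne S) = (a : WithOne S)

/-- Green's J relation. -/
def GreenJ (a b : S) : Prop :=
  (∃ u v : WithOne S, u * (a : WithOne S) * v = (b : WithOne S)) ∧
    ∃ u v : WithOne S, u * (b : WithOne S) * v = (a : WithOne S)

/-- Green's H relation. -/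
def GreenH (a b : S) : Prop := GreenR a b ∧ GreenL a b

/-- Green's D relation, as R ∘ L. -/
def GreenD (a b : S) : Prop := ∃ c : S, GreenR a c ∧ GreenL c b

/-- A set is stable if for its elements `x`: `xa J x → xa R x` and `ax J x → ax L x`. -/
def StableSet (J : Set S) : Prop :=
  ∀ x ∈ J, ∀ a : S, (GreenJ (x * a) x → GreenR (x * a) x) ∧ (GreenJ (a * x) x → GreenL (a * x) x)

/-- The set is a J-class. -/
def IsJClass (J : Set S) : Prop := ∃ a : S, J = {b | GreenJ a b}

/-- The set is a D-class. -/
def IsDClass (J : Set S) : Prop := ∃ a : S, J = {b | GreenD a b}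

/-- A binary relation is a congruence on the semigroup. -/
def IsCongruence (r : S → S → Prop) : Prop :=
  Equivalence r ∧ ∀ a b c : S, r a b → r (c * a) (c * b) ∧ r (a * c) (b * c)

/-- `N` is a normal subgroup of the subgroup `G` of `S` with identity `e`. -/
def IsNormalIn (N G : Set S) (e : S) : Prop :=
  N ⊆ G ∧ e ∈ N ∧ (∀ x ∈ N, ∀ y ∈ N, x * y ∈ N) ∧
    (∀ x ∈ N, ∃ y ∈ N, x * y = e ∧ y * x = e) ∧
    ∀ g ∈ G, ∀ g' ∈ G, g * g' = e → g' * g = e → ∀ x ∈ N, g * x * g' ∈ N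

/-- The relation ν_N = S¹(N × N)S¹ ∩ (J × J). -/
def Nu (J N : Set S) (a b : S) : Prop :=
  a ∈ J ∧ b ∈ J ∧ ∃ x ∈ N, ∃ y ∈ N, ∃ s t : WithOne S,
    s * (x : WithOne S) * t = (a : WithOne S) ∧ s * (y : WithOne S) * t = (b : WithOne S)

/-- `J` is disjoint from `I` and is minimal among the J-classes of `S \ I`. -/
def MinimalJClassOutside (J I : Set S) : Prop :=
  (∀ a ∈ J, a ∉ I) ∧
    ∀ b : S, b ∉ I →
      (∃ a ∈ J, ∃ u v : WithOne S, u * (a : WithOne S) * v = (b : WithOne S)) → b ∈ J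

end SG

/-!
Stability makes two-sided translations inside `J` behave like Green's lemma: if `s * y * t = b`
with `y, b ∈ J`, then `y * t` is `R`-related to `y` and `L`-related to `b`, so the translation
`h ↦ s * h * t` carries `H`-classes onto `H`-classes and can be undone by some `h ↦ s₁ * h * t₁`.
This gives `ν_N ⊆ H`. For transitivity, `s x t = b = s' x' t'` and `c = s' y' t'` with
`x, x', y, y' ∈ N`. Pulling `c` back through `s, t` gives `g ∈ H_e` with `c = s g t`, and composing
the translations gives `m, n` with `m x' n = y` and `m y' n = g`. With `p = e m e ∈ H_e`, one
obtains `g = p (y' x'⁻¹) p⁻¹ y ∈ N` by normality.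
-/

namespace SG

variable {S : Type*} [Semigroup S] {J N : Set S}

theorem exists_mul_coe_mul_eq_coe (s : WithOne S) (w : S) (t : WithOne S) :
    ∃ z : S, s * (w : WithOne S) * t = z := by
  induction s using WithOne.recOneCoe <;> induction t using WithOne.recOneCoe <;>
    simp only [one_mul, mul_one, ← WithOne.coe_mul] <;> exact ⟨_, rfl⟩

theorem GreenR.refl (a : S) : GreenR a a := ⟨⟨1, mul_one _⟩, ⟨1, mul_one _⟩⟩

theorem GreenR.symm {a b : S} (h : GreenR a b) : GreenR b a := ⟨h.2, h.1⟩

theorem GreenR.trans {a b c : S} (h₁ : GreenR a b) (h₂ : GreenR b c) : GreenR a c := by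
  obtain ⟨⟨u, hu⟩, ⟨v, hv⟩⟩ := h₁
  obtain ⟨⟨u', hu'⟩, ⟨v', hv'⟩⟩ := h₂
  exact ⟨⟨u * u', by rw [← mul_assoc, hu, hu']⟩, ⟨v' * v, by rw [← mul_assoc, hv', hv]⟩⟩

theorem GreenL.refl (a : S) : GreenL a a := ⟨⟨1, one_mul _⟩, ⟨1, one_mul _⟩⟩

theorem GreenL.symm {a b : S} (h : GreenL a b) : GreenL b a := ⟨h.2, h.1⟩

theorem GreenL.trans {a b c : S} (h₁ : GreenL a b) (h₂ : GreenL b c) : GreenL a c := by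
  obtain ⟨⟨u, hu⟩, ⟨v, hv⟩⟩ := h₁
  obtain ⟨⟨u', hu'⟩, ⟨v', hv'⟩⟩ := h₂
  exact ⟨⟨u' * u, by rw [mul_assoc, hu, hu']⟩, ⟨v * v', by rw [mul_assoc, hv', hv]⟩⟩

theorem GreenH.symm {a b : S} (h : GreenH a b) : GreenH b a := ⟨h.1.symm, h.2.symm⟩

theorem GreenH.trans {a b c : S} (h₁ : GreenH a b) (h₂ : GreenH b c) : GreenH a c :=
  ⟨h₁.1.trans h₂.1, h₁.2.trans h₂.2⟩

theorem GreenJ.symm {a b : S} (h : GreenJ a b) : GreenJ b a := ⟨h.2, h.1⟩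

theorem GreenJ.trans {a b c : S} (h₁ : GreenJ a b) (h₂ : GreenJ b c) : GreenJ a c := by
  obtain ⟨⟨u, v, huv⟩, ⟨p, q, hpq⟩⟩ := h₁
  obtain ⟨⟨u', v', huv'⟩, ⟨p', q', hpq'⟩⟩ := h₂
  refine ⟨⟨u' * u, v * v', ?_⟩, ⟨p * p', q' * q, ?_⟩⟩
  · rw [← huv', ← huv]; simp only [mul_assoc]
  · rw [← hpq, ← hpq']; simp only [mul_assoc]

theorem GreenH.greenJ {a b : S} (h : GreenH a b) : GreenJ a b := by
  obtain ⟨⟨⟨u, hu⟩, ⟨v, hv⟩⟩, -⟩ := h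
  exact ⟨⟨1, u, by rw [one_mul, hu]⟩, ⟨1, v, by rw [one_mul, hv]⟩⟩

theorem GreenR.mul_left {p q z₁ z₂ : S} (s : WithOne S) (h : GreenR p q)
    (h₁ : s * (p : WithOne S) = z₁) (h₂ : s * (q : WithOne S) = z₂) : GreenR z₁ z₂ := by
  obtain ⟨⟨u, hu⟩, ⟨v, hv⟩⟩ := h
  exact ⟨⟨u, by rw [← h₁, mul_assoc, hu, h₂]⟩, ⟨v, by rw [← h₂, mul_assoc, hv, h₁]⟩⟩

theorem GreenL.mul_right {p q z₁ z₂ : S} (t : WithOne S) (h : GreenL p q)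
    (h₁ : (p : WithOne S) * t = z₁) (h₂ : (q : WithOne S) * t = z₂) : GreenL z₁ z₂ := by
  obtain ⟨⟨u, hu⟩, ⟨v, hv⟩⟩ := h
  exact ⟨⟨u, by rw [← h₁, ← mul_assoc, hu, h₂]⟩, ⟨v, by rw [← h₂, ← mul_assoc, hv, h₁]⟩⟩

theorem GreenR.idem_mul {a e : S} (he : e * e = e) (h : GreenR a e) : e * a = a := by
  obtain ⟨v, hv⟩ := h.2
  apply WithOne.coe_injective
  rw [WithOne.coe_mul, ← hv, ← mul_assoc, ← WithOne.coe_mul, he]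

theorem GreenL.mul_idem {a e : S} (he : e * e = e) (h : GreenL a e) : a * e = a := by
  obtain ⟨v, hv⟩ := h.2
  apply WithOne.coe_injective
  rw [WithOne.coe_mul, ← hv, mul_assoc, ← WithOne.coe_mul, he]

theorem GreenH.exists_inv {a e : S} (he : e * e = e) (h : GreenH a e) :
    ∃ a' : S, GreenH a' e ∧ a * a' = e ∧ a' * a = e := by
  have hea : e * a = a := h.1.idem_mul he
  have hae : a * e = a := h.2.mul_idem he
  obtain ⟨u, hu⟩ := h.1.1
  obtain ⟨w, hw⟩ := h.2.1
  -- the inverse is `e * u * e`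
  obtain ⟨k, hk⟩ := exists_mul_coe_mul_eq_coe u e 1
  rw [mul_one] at hk
  have hak : a * k = e := by
    apply WithOne.coe_injective
    rw [WithOne.coe_mul, ← hk, ← mul_assoc, hu, ← WithOne.coe_mul, he]
  have heek : e * (e * k) = e * k := by rw [← mul_assoc, he]
  have hke : k * e = k := WithOne.coe_injective <| by
    rw [WithOne.coe_mul, ← hk, mul_assoc, ← WithOne.coe_mul, he]
  have hekee : e * k * e = e * k := by rw [mul_assoc, hke]
  have hright : a * (e * k) = e := by rw [← mul_assoc, hae, hak]
  have hleft : e * k * a = e := by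
    apply WithOne.coe_injective
    calc ((e * k * a : S) : WithOne S) = w * a * ↑(e * k * a) := by
          rw [hw, ← WithOne.coe_mul, ← mul_assoc, ← mul_assoc, he]
      _ = w * ↑(a * (e * k * a)) := by rw [mul_assoc, ← WithOne.coe_mul]
      _ = e := by rw [← mul_assoc a, hright, hea, hw]
  refine ⟨e * k, ⟨⟨⟨a, ?_⟩, ⟨e * k, ?_⟩⟩, ⟨⟨a, ?_⟩, ⟨e * k, ?_⟩⟩⟩, hright, hleft⟩ <;>
    rw [← WithOne.coe_mul]
  exacts [congrArg _ hleft, congrArg _ heek, congrArg _ hright, congrArg _ hekee]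

theorem IsJClass.greenJ (hJ : IsJClass J) {p q : S} (hp : p ∈ J) (hq : q ∈ J) :
    GreenJ p q := by
  obtain ⟨a, rfl⟩ := hJ
  exact GreenJ.trans (GreenJ.symm hp) hq

theorem IsJClass.mem_of_greenJ (hJ : IsJClass J) {p q : S} (hp : p ∈ J)
    (h : GreenJ p q) : q ∈ J := by
  obtain ⟨a, rfl⟩ := hJ
  exact GreenJ.trans hp h

theorem IsJClass.mem_of_greenH (hJ : IsJClass J) {p q : S} (hp : p ∈ J)
    (h : GreenH q p) : q ∈ J :=
  hJ.mem_of_greenJ hp h.greenJ.symm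

theorem IsJClass.mem_of_between (hJ : IsJClass J) {w z c : S} (hw : w ∈ J)
    (hc : c ∈ J) {u v u' v' : WithOne S} (h₁ : u * w * v = z) (h₂ : u' * z * v' = c) :
    z ∈ J := by
  refine hJ.mem_of_greenJ hw ⟨⟨u, v, h₁⟩, ?_⟩
  obtain ⟨⟨p, q, hpq⟩, -⟩ := hJ.greenJ hc hw
  exact ⟨p * u', v' * q, by rw [← hpq, ← h₂]; simp only [mul_assoc]⟩

theorem StableSet.greenR_of_coe_mul (hJ : IsJClass J) (hs : StableSet J) {w z : S}
    (hw : w ∈ J) (hz : z ∈ J) {t : WithOne S} (h : (w : WithOne S) * t = z) : GreenR z w := by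
  induction t using WithOne.recOneCoe with
  | one =>
    rw [mul_one, WithOne.coe_inj] at h
    exact h ▸ GreenR.refl w
  | coe t =>
    rw [← WithOne.coe_mul, WithOne.coe_inj] at h
    subst h
    exact (hs w hw t).1 (hJ.greenJ hz hw)

theorem StableSet.greenL_of_mul_coe (hJ : IsJClass J) (hs : StableSet J) {w z : S}
    (hw : w ∈ J) (hz : z ∈ J) {s : WithOne S} (h : s * (w : WithOne S) = z) : GreenL z w := by
  induction s using WithOne.recOneCoe with
  | one =>
    rw [one_mul, WithOne.coe_inj] at h
    exact h ▸ GreenL.refl w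
  | coe s =>
    rw [← WithOne.coe_mul, WithOne.coe_inj] at h
    subst h
    exact (hs w hw s).2 (hJ.greenJ hz hw)

theorem StableSet.exists_greenR_greenL (hJ : IsJClass J) (hs : StableSet J)
    {x a : S} (hx : x ∈ J) (ha : a ∈ J) {s t : WithOne S} (h : s * x * t = a) :
    ∃ z ∈ J, (x : WithOne S) * t = z ∧ s * (z : WithOne S) = a ∧ GreenR z x ∧ GreenL a z := by
  obtain ⟨z, hz⟩ := exists_mul_coe_mul_eq_coe 1 x t
  rw [one_mul] at hz
  have hsz : s * (z : WithOne S) = a := by rw [← hz, ← mul_assoc, h]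
  have hzJ : z ∈ J := hJ.mem_of_between hx ha (u := 1) (v' := 1)
    (by rw [one_mul, hz]) (by rw [mul_one, hsz])
  exact ⟨z, hzJ, hz, hsz, hs.greenR_of_coe_mul hJ hx hzJ hz, hs.greenL_of_mul_coe hJ hzJ ha hsz⟩

theorem StableSet.greenH_of_mul_mul (hJ : IsJClass J) (hs : StableSet J)
    {x y a b : S} (hxy : GreenH x y) (hx : x ∈ J) (ha : a ∈ J) (hb : b ∈ J) {s t : WithOne S}
    (hxa : s * x * t = a) (hyb : s * y * t = b) : GreenH a b := by
  have hy : y ∈ J := hJ.mem_of_greenJ hx hxy.greenJ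
  obtain ⟨z₁, -, hz₁, hsz₁, hz₁x, haz₁⟩ := hs.exists_greenR_greenL hJ hx ha hxa
  obtain ⟨z₂, -, hz₂, hsz₂, hz₂y, hbz₂⟩ := hs.exists_greenR_greenL hJ hy hb hyb
  exact ⟨(hz₁x.trans (hxy.1.trans hz₂y.symm)).mul_left s hsz₁ hsz₂,
    haz₁.trans ((hxy.2.mul_right t hz₁ hz₂).trans hbz₂.symm)⟩

theorem StableSet.exists_translate_inverse (hJ : IsJClass J) (hs : StableSet J)
    {y b : S} (hy : y ∈ J) (hb : b ∈ J) {s t : WithOne S} (h : s * y * t = b) :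
    ∃ s₁ t₁ : WithOne S, s₁ * b * t₁ = y ∧ ∀ c : S, GreenH c b → s * (s₁ * c * t₁) * t = c := by
  obtain ⟨z, -, hz, hsz, hzy, hbz⟩ := hs.exists_greenR_greenL hJ hy hb h
  obtain ⟨t₁, ht₁⟩ := hzy.1
  obtain ⟨s₁, hs₁⟩ := hbz.1
  refine ⟨s₁, t₁, by rw [hs₁, ht₁], fun c hc => ?_⟩
  obtain ⟨v, hv⟩ := hc.1.2
  obtain ⟨w, hw⟩ := (hc.2.trans hbz).2
  have hleft : s * s₁ * c = c := by rw [← hv, ← mul_assoc, mul_assoc s, hs₁, hsz]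
  have hright : (c : WithOne S) * t₁ * t = c := by rw [← hw, mul_assoc w, ht₁, mul_assoc, hz]
  calc s * (s₁ * c * t₁) * t = s * s₁ * (c * t₁ * t) := by simp only [mul_assoc]
    _ = c := by rw [hright, hleft]

theorem StableSet.greenH_of_sandwich (hJ : IsJClass J) (hs : StableSet J)
    {e p y : S} (heJ : e ∈ J) (hy : y ∈ J) {m k : WithOne S} (hp : e * m * e = p)
    (hpy : p * k = y) : GreenH p e := by
  have hpJ : p ∈ J := hJ.mem_of_between heJ hy (v := 1) (u' := 1)
    (by rw [mul_one, hp]) (by rw [one_mul, hpy])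
  exact ⟨hs.greenR_of_coe_mul hJ heJ hpJ (by rw [← mul_assoc, hp]),
    hs.greenL_of_mul_coe hJ heJ hpJ hp⟩

theorem IsNormalIn.mem_of_translate_of_greenH {e : S} (hN : IsNormalIn N {x | GreenH x e} e)
    (he : e * e = e) {p x y z g : S} (n : WithOne S) (hp : GreenH p e) (hx : x ∈ N)
    (hy : y ∈ N) (hz : z ∈ N) (hxz : p * x * n = z) (hyg : p * y * n = g) : g ∈ N := by
  obtain ⟨p', hp', hpp', hp'p⟩ := hp.exists_inv he
  obtain ⟨x', hx', -, hx'x⟩ := hN.2.2.2.1 x hx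
  have hconj : p * (y * x') * p' ∈ N :=
    hN.2.2.2.2 p hp p' hp' hpp' hp'p _ (hN.2.2.1 _ hy _ hx')
  have hex : e * x = x := (hN.1 hx).1.idem_mul he
  have hye : y * e = y := (hN.1 hy).2.mul_idem he
  have hg : g = p * (y * x') * p' * z := by
    apply WithOne.coe_injective
    calc (g : WithOne S) = ↑(p * (y * (x' * (p' * (p * x))))) * n := by
          rw [← mul_assoc p', hp'p, hex, hx'x, hye, ← hyg, WithOne.coe_mul]
      _ = ↑(p * (y * x') * p') * (p * x * n) := by simp only [WithOne.coe_mul, mul_assoc]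
      _ = ↑(p * (y * x') * p' * z) := by rw [hxz, ← WithOne.coe_mul]
  rw [hg]
  exact hN.2.2.1 _ hconj z hz

theorem IsNormalIn.mem_of_translate {e : S} (hJ : IsJClass J) (hs : StableSet J)
    (hN : IsNormalIn N {x | GreenH x e} e) (he : e * e = e) (heJ : e ∈ J) {x y z g : S}
    (hx : x ∈ N) (hy : y ∈ N) (hz : z ∈ N) (hg : GreenH g e) {m n : WithOne S}
    (hxz : m * x * n = z) (hyg : m * y * n = g) : g ∈ N := by
  obtain ⟨p, hp⟩ := exists_mul_coe_mul_eq_coe ((e : WithOne S) * m) e 1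
  rw [mul_one] at hp
  have hpu : ∀ u : S, e * u = u → (p : WithOne S) * u * n = e * (m * u * n) := fun u hu => by
    rw [← hp, mul_assoc _ (e : WithOne S), ← WithOne.coe_mul, hu]
    simp only [mul_assoc]
  have hpx := hpu x ((hN.1 hx).1.idem_mul he)
  rw [hxz, ← WithOne.coe_mul e z, (hN.1 hz).1.idem_mul he] at hpx
  have hpy := hpu y ((hN.1 hy).1.idem_mul he)
  rw [hyg, ← WithOne.coe_mul e g, hg.1.idem_mul he] at hpy
  have hpH : GreenH p e := hs.greenH_of_sandwich hJ heJ (hJ.mem_of_greenH heJ (hN.1 hz)) hp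
    (by rw [← mul_assoc, hpx])
  exact hN.mem_of_translate_of_greenH he n hpH hx hy hz hpx hpy

theorem Nu.greenH {e : S} (hJ : IsJClass J) (hs : StableSet J)
    (hN : N ⊆ {x | GreenH x e}) (heJ : e ∈ J) {a b : S} (h : Nu J N a b) : GreenH a b := by
  obtain ⟨ha, hb, x, hx, y, hy, s, t, hxa, hyb⟩ := h
  exact hs.greenH_of_mul_mul hJ ((hN hx).trans (hN hy).symm) (hJ.mem_of_greenH heJ (hN hx))
    ha hb hxa hyb

theorem Nu.refl {e : S} (hJ : IsJClass J) (heJ : e ∈ J) (heN : e ∈ N) {a : S}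
    (ha : a ∈ J) : Nu J N a a := by
  obtain ⟨u, v, huv⟩ := (hJ.greenJ heJ ha).1
  exact ⟨ha, ha, e, heN, e, heN, u, v, huv, huv⟩

theorem Nu.symm {a b : S} (h : Nu J N a b) : Nu J N b a := by
  obtain ⟨ha, hb, x, hx, y, hy, s, t, hxa, hyb⟩ := h
  exact ⟨hb, ha, y, hy, x, hx, s, t, hyb, hxa⟩

theorem Nu.trans {e : S} (hJ : IsJClass J) (hs : StableSet J)
    (hN : IsNormalIn N {x | GreenH x e} e) (he : e * e = e) (heJ : e ∈ J) {a b c : S}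
    (hab : Nu J N a b) (hbc : Nu J N b c) : Nu J N a c := by
  have hbc' : GreenH b c := hbc.greenH hJ hs hN.1 heJ
  obtain ⟨ha, hb, x, hx, y, hy, s, t, hxa, hyb⟩ := hab
  obtain ⟨-, hc, x', hx', y', hy', s', t', hx'b, hy'c⟩ := hbc
  have hyJ : y ∈ J := hJ.mem_of_greenH heJ (hN.1 hy)
  obtain ⟨s₁, t₁, hby, hback⟩ := hs.exists_translate_inverse hJ hyJ hb hyb
  obtain ⟨g, hg⟩ := exists_mul_coe_mul_eq_coe s₁ c t₁
  have hgc : s * g * t = c := by rw [← hg]; exact hback c hbc'.symm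
  have hgJ : g ∈ J := hJ.mem_of_greenJ hc ⟨⟨s₁, t₁, hg⟩, ⟨s, t, hgc⟩⟩
  have hyg : GreenH y g := hs.greenH_of_mul_mul hJ hbc' hb hyJ hgJ hby hg
  have hgN : g ∈ N := hN.mem_of_translate hJ hs he heJ hx' hy' hy (hyg.symm.trans (hN.1 hy))
    (m := s₁ * s') (n := t' * t₁)
    (by rw [← hby, ← hx'b]; simp only [mul_assoc]) (by rw [← hg, ← hy'c]; simp only [mul_assoc])
  exact ⟨ha, hc, x, hx, g, hgN, s, t, hxa, hgc⟩

end SG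

theorem stmt7_general {S : Type*} [Semigroup S] (J N : Set S) (e : S)
    (hJ : SG.IsJClass J) (hs : SG.StableSet J)
    (he : e * e = e) (heJ : e ∈ J)
    (hN : SG.IsNormalIn N {x : S | SG.GreenH x e} e) :
    (∀ a b : S, SG.Nu J N a b → SG.GreenH a b) ∧
    (∀ a ∈ J, SG.Nu J N a a) ∧
    (∀ a b : S, SG.Nu J N a b → SG.Nu J N b a) ∧
    (∀ a b c : S, SG.Nu J N a b → SG.Nu J N b c → SG.Nu J N a c) :=
  ⟨fun _ _ h => h.greenH hJ hs hN.1 heJ, fun _ ha => SG.Nu.refl hJ heJ hN.2.1 ha,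
    fun _ _ h => h.symm, fun _ _ _ hab hbc => hab.trans hJ hs hN he heJ hbc⟩

/-- Let `J` be a stable regular J-class of a semigroup `S` and `N` a
normal subgroup of a maximal subgroup (the group `H`-class of an idempotent `e ∈ J`).
Then `ν_N` is contained in Green's `H` relation and is an equivalence relation on `J`. -/
theorem stmt7 {S : Type*} [Semigroup S] (J N : Set S) (e : S)
    (hJ : SG.IsJClass J) (hs : SG.StableSet J) (hreg : SG.RegularSet J)
    (he : e * e = e) (heJ : e ∈ J)
    (hN : SG.IsNormalIn N {x : S | SG.GreenH x e} e) :
    (∀ a b : S, SG.Nu J N a b → SG.GreenH a b) ∧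
    (∀ a ∈ J, SG.Nu J N a a) ∧
    (∀ a b : S, SG.Nu J N a b → SG.Nu J N b a) ∧
    (∀ a b c : S, SG.Nu J N a b → SG.Nu J N b c → SG.Nu J N a c) :=
  stmt7_general J N e hJ hs he heJ hN
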